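/- arXiv:2311.11225 — 8 statements merged into one kernel-verified Lean document; each statement's English description precedes it below -/
import Mathlib

section
/- Let m and C be positive natural numbers, let p, p' : Fin m → Fin C be two prediction vectors differing on at most k indices, let M c = |{j | p j = c}| for each class c, and let y be the majority-vote label of p (the smallest label attaining the maximal vote count). If 2·k ≤ M y - max over c ≠ y of (M c + (if c < y then 1 else 0)), then the majority-vote label of p' is also y. -/
/-- Number of base classifiers predicting class `c`. -/
def voteCount {m C : ℕ} (p : Fin m → Fin C) (c : Fin C) : ℕ :=
  (Finset.univ.filter fun j => p j = c).card

/-- Majority-vote label: smallest label among those attaining the maximal vote count. -/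
def majorityLabel {m C : ℕ} (hC : 0 < C) (p : Fin m → Fin C) : Fin C :=
  (Finset.univ.filter fun c => voteCount p c = Finset.univ.sup (voteCount p)).min'
    (by
      haveI : Nonempty (Fin C) := ⟨⟨0, hC⟩⟩
      obtain ⟨c, -, hc⟩ := Finset.exists_mem_eq_sup (Finset.univ : Finset (Fin C))
        Finset.univ_nonempty (voteCount p)
      exact ⟨c, Finset.mem_filter.mpr ⟨Finset.mem_univ c, hc.symm⟩⟩)

lemma voteCount_le_add {m C : ℕ} (p p' : Fin m → Fin C) (c : Fin C) :
    voteCount p' c ≤ voteCount p c + (Finset.univ.filter fun j => p j ≠ p' j).card := by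
  have h : (Finset.univ.filter fun j => p' j = c) ⊆
      (Finset.univ.filter fun j => p j = c) ∪ (Finset.univ.filter fun j => p j ≠ p' j) := by
    intro j hj
    simp only [Finset.mem_filter, Finset.mem_union, Finset.mem_univ, true_and, ne_eq] at *
    by_cases hpj : p j = p' j
    · exact Or.inl (hpj.trans hj)
    · exact Or.inr hpj
  calc voteCount p' c ≤ _ := Finset.card_le_card h
    _ ≤ _ := Finset.card_union_le _ _

lemma majorityLabel_eq {m C : ℕ} (hC : 0 < C) (p : Fin m → Fin C) (y : Fin C)
    (h1 : ∀ c, voteCount p c ≤ voteCount p y)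
    (h2 : ∀ c, c < y → voteCount p c < voteCount p y) :
    majorityLabel hC p = y := by
  have hsup : Finset.univ.sup (voteCount p) = voteCount p y :=
    le_antisymm (Finset.sup_le fun c _ => h1 c) (Finset.le_sup (Finset.mem_univ y))
  have hyS : y ∈ Finset.univ.filter
      fun c => voteCount p c = Finset.univ.sup (voteCount p) := by
    simp [hsup]
  unfold majorityLabel
  apply le_antisymm
  · exact Finset.min'_le _ _ hyS
  · apply Finset.le_min'
    intro c hc
    simp only [Finset.mem_filter, Finset.mem_univ, true_and, hsup] at hc
    by_contra hlt
    exact absurd hc (ne_of_lt (h2 c (lt_of_not_ge hlt)))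

/-- Per-input content of Theorem 1 (Equations (5)–(7)) of TextGuard: if twice the
    number `k` of corrupted indices is at most the certified-size gap
    `M y - max_{c ≠ y}(M c + I(c < y))`, the majority-vote label is unchanged. -/
theorem certified_size_individual {m C : ℕ} (hm : 0 < m) (hC : 0 < C) (k : ℕ)
    (p p' : Fin m → Fin C)
    (hdiff : (Finset.univ.filter fun j => p j ≠ p' j).card ≤ k)
    (y : Fin C) (hy : y = majorityLabel hC p)
    (hcert : 2 * k ≤ voteCount p y -
      ((Finset.univ.erase y).sup fun c =>
        voteCount p c + if c < y then 1 else 0)) :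
    majorityLabel hC p' = y := by
  rcases Nat.eq_zero_or_pos k with hk | hk
  · subst hk
    have hc0 : (Finset.univ.filter fun j => p j ≠ p' j).card = 0 := Nat.le_zero.mp hdiff
    have : p = p' := by
      funext j
      by_contra hne
      have : j ∈ Finset.univ.filter fun j => p j ≠ p' j := by simp [hne]
      rw [Finset.card_eq_zero.mp hc0] at this
      exact absurd this (Finset.notMem_empty j)
    rw [← this, ← hy]
  · set f : Fin C → ℕ := fun c => voteCount p c + if c < y then 1 else 0 with hf
    have hgap : (Finset.univ.erase y).sup f + 2 * k ≤ voteCount p y := by omega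
    have hb1 : ∀ c, voteCount p' c ≤ voteCount p c + k :=
      fun c => le_trans (voteCount_le_add p p' c) (by omega)
    have hb2 : ∀ c, voteCount p c ≤ voteCount p' c + k := by
      intro c
      have := voteCount_le_add p' p c
      have hcard : (Finset.univ.filter fun j => p' j ≠ p j).card =
          (Finset.univ.filter fun j => p j ≠ p' j).card := by
        congr 1; apply Finset.filter_congr; intro j _; simp [ne_comm]
      omega
    have hkey : ∀ c ≠ y, voteCount p c + (if c < y then 1 else 0) + 2 * k ≤ voteCount p y := by
      intro c hcy
      have h2 : voteCount p c + (if c < y then 1 else 0) ≤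
          (Finset.univ.erase y).sup fun c => voteCount p c + if c < y then 1 else 0 :=
        Finset.le_sup (f := fun c => voteCount p c + if c < y then 1 else 0)
          (Finset.mem_erase.mpr ⟨hcy, Finset.mem_univ c⟩)
      exact le_trans (Nat.add_le_add_right h2 (2 * k)) hgap
    apply majorityLabel_eq
    · intro c
      by_cases hcy : c = y
      · subst hcy; exact le_rfl
      · have h1 := hkey c hcy
        have := hb1 c; have := hb2 y
        by_cases hlt : c < y <;> simp [hlt] at h1 <;> omega
    · intro c hlt
      have h1 := hkey c (ne_of_lt hlt)
      have := hb1 c; have := hb2 y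
      simp [hlt] at h1
      omega
end

section
/- Let m and C be positive natural numbers, let Γ be a subset of Fin m, and let p, p' : Fin m → Fin C be two prediction vectors that agree on every index outside Γ. Then for every class c, the vote counts M c = |{j | p j = c}| and M' c = |{j | p' j = c}| satisfy M' c ≤ M c + |{j ∈ Γ | p j ≠ c}|. -/
/-- Equation (10) of TextGuard (joint-certification upper bound): if `p` and `p'`
    agree outside `Γ`, then `M' c ≤ M c + |{j ∈ Γ | p j ≠ c}|`. -/
theorem joint_upper_bound {m C : ℕ} (hm : 0 < m) (hC : 0 < C)
    (Γ : Finset (Fin m)) (p p' : Fin m → Fin C)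
    (hagree : ∀ j : Fin m, j ∉ Γ → p j = p' j) :
    ∀ c : Fin C,
      voteCount p' c ≤ voteCount p c + (Γ.filter fun j => p j ≠ c).card := by
  intro c
  have hsub : (Finset.univ.filter fun j => p' j = c) ⊆
      (Finset.univ.filter fun j => p j = c) ∪ (Γ.filter fun j => p j ≠ c) := by
    intro j hj
    simp only [Finset.mem_filter, Finset.mem_union, Finset.mem_univ, true_and] at hj ⊢
    by_cases hpc : p j = c
    · exact Or.inl hpc
    · refine Or.inr ⟨?_, hpc⟩
      by_contra hΓ
      exact hpc ((hagree j hΓ).trans hj)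
  calc voteCount p' c ≤ _ := Finset.card_le_card hsub
    _ ≤ _ := Finset.card_union_le _ _
end

section
/- Let m and C be positive natural numbers, let Γ be a subset of Fin m, let p, p' : Fin m → Fin C be two prediction vectors agreeing on every index outside Γ, let M c = |{j | p j = c}| for each class c, and let y be the majority-vote label of p (the smallest label attaining the maximal vote count). If M y - |{j ∈ Γ | p j = y}| ≥ max over c ≠ y of (M c + |{j ∈ Γ | p j ≠ c}| + (if c < y then 1 else 0)), then the majority-vote label of p' is also y. -/
/-- Joint-certification sufficient condition (Section 4.2.3 of TextGuard):
    if `M y - |{j ∈ Γ | p j = y}| ≥ max_{c ≠ y}(M c + |{j ∈ Γ | p j ≠ c}| + I(c < y))`,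
    then any `p'` agreeing with `p` outside `Γ` has the same majority-vote label `y`. -/
theorem joint_certification {m C : ℕ} (hm : 0 < m) (hC : 0 < C)
    (Γ : Finset (Fin m)) (p p' : Fin m → Fin C)
    (hagree : ∀ j : Fin m, j ∉ Γ → p j = p' j)
    (y : Fin C) (hy : y = majorityLabel hC p)
    (hcond : voteCount p y - (Γ.filter fun j => p j = y).card ≥
      ((Finset.univ.erase y).sup fun c =>
        voteCount p c + (Γ.filter fun j => p j ≠ c).card +
          if c < y then 1 else 0)) :
    majorityLabel hC p' = y := by
  have key : ∀ c : Fin C, c ≠ y →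
      voteCount p' c + (if c < y then 1 else 0) ≤ voteCount p' y := by
    intro c hc
    have hmem : c ∈ Finset.univ.erase y := Finset.mem_erase.mpr ⟨hc, Finset.mem_univ c⟩
    have h1 := Finset.le_sup (f := fun c =>
      voteCount p c + (Γ.filter fun j => p j ≠ c).card + if c < y then 1 else 0) hmem
    have h2 := le_trans h1 hcond
    have ha : (Γ.filter fun j => p j = y).card ≤ voteCount p y := by
      apply Finset.card_le_card
      intro j hj
      simp only [voteCount, Finset.mem_filter] at hj ⊢
      exact ⟨Finset.mem_univ j, hj.2⟩
    have hA : voteCount p' c ≤ voteCount p c + (Γ.filter fun j => p j ≠ c).card := by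
      calc voteCount p' c
          ≤ ((Finset.univ.filter fun j => p j = c) ∪ (Γ.filter fun j => p j ≠ c)).card := by
            apply Finset.card_le_card
            intro j hj
            simp only [voteCount, Finset.mem_filter, Finset.mem_union] at hj ⊢
            by_cases hjΓ : j ∈ Γ
            · by_cases hpc : p j = c
              · exact Or.inl ⟨Finset.mem_univ j, hpc⟩
              · exact Or.inr ⟨hjΓ, hpc⟩
            · exact Or.inl ⟨Finset.mem_univ j, (hagree j hjΓ) ▸ hj.2⟩
        _ ≤ _ := Finset.card_union_le _ _
    have hB : voteCount p y ≤ voteCount p' y + (Γ.filter fun j => p j = y).card := by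
      calc voteCount p y
          ≤ ((Finset.univ.filter fun j => p' j = y) ∪ (Γ.filter fun j => p j = y)).card := by
            apply Finset.card_le_card
            intro j hj
            simp only [voteCount, Finset.mem_filter, Finset.mem_union] at hj ⊢
            by_cases hjΓ : j ∈ Γ
            · exact Or.inr ⟨hjΓ, hj.2⟩
            · exact Or.inl ⟨Finset.mem_univ j, (hagree j hjΓ) ▸ hj.2⟩
        _ ≤ _ := Finset.card_union_le _ _
    by_cases hcy : c < y <;> simp only [hcy, if_true, if_false] at h2 ⊢ <;> omega
  have hsup : Finset.univ.sup (voteCount p') = voteCount p' y := by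
    apply le_antisymm
    · apply Finset.sup_le
      intro c _
      by_cases hc : c = y
      · exact hc ▸ le_refl _
      · have := key c hc; omega
    · exact Finset.le_sup (Finset.mem_univ y)
  have hyS : y ∈ Finset.univ.filter
      fun c => voteCount p' c = Finset.univ.sup (voteCount p') :=
    Finset.mem_filter.mpr ⟨Finset.mem_univ y, hsup.symm⟩
  unfold majorityLabel
  apply le_antisymm
  · exact Finset.min'_le _ _ hyS
  · apply Finset.le_min'
    intro c hcS
    by_contra hlt
    push_neg at hlt
    have hc : c ≠ y := ne_of_lt hlt
    have := key c hc
    simp only [hlt, if_true] at this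
    have hceq : voteCount p' c = voteCount p' y := by
      have := (Finset.mem_filter.mp hcS).2
      omega
    omega
end

section
/- Let m and C be positive natural numbers, let p : Fin m → Fin C be a prediction vector with vote counts M c = |{j | p j = c}|, let y be the majority-vote label of p (the smallest label attaining the maximal vote count), and let Γ ⊆ Fin m. If 2·|Γ| ≤ M y - max over c ≠ y of (M c + (if c < y then 1 else 0)) (i.e., the certified size of p is at least |Γ|), then the joint-certification condition holds for Γ: M y - |{j ∈ Γ | p j = y}| ≥ max over c ≠ y of (M c + |{j ∈ Γ | p j ≠ c}| + (if c < y then 1 else 0)). -/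
/-- Joint certification is never weaker than individual certification (TextGuard,
    cf. Table IV(b)): if the certified size of `p` is at least `|Γ|`, then the
    joint-certification condition holds for `Γ`. -/
theorem joint_of_individual {m C : ℕ} (hm : 0 < m) (hC : 0 < C)
    (p : Fin m → Fin C) (y : Fin C) (hy : y = majorityLabel hC p)
    (Γ : Finset (Fin m))
    (hcert : 2 * Γ.card ≤ voteCount p y -
      ((Finset.univ.erase y).sup fun c =>
        voteCount p c + if c < y then 1 else 0)) :
    voteCount p y - (Γ.filter fun j => p j = y).card ≥
      ((Finset.univ.erase y).sup fun c =>
        voteCount p c + (Γ.filter fun j => p j ≠ c).card +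
          if c < y then 1 else 0) := by
  have hmem : y ∈ Finset.univ.filter fun c => voteCount p c = Finset.univ.sup (voteCount p) := by
    rw [hy]; exact Finset.min'_mem _ _
  have hAy : voteCount p y = Finset.univ.sup (voteCount p) := (Finset.mem_filter.mp hmem).2
  have key : ∀ c ∈ Finset.univ.erase y,
      voteCount p c + (if c < y then 1 else 0) ≤ voteCount p y := by
    intro c hc
    have hne : c ≠ y := (Finset.mem_erase.mp hc).1
    have hle : voteCount p c ≤ voteCount p y :=
      hAy ▸ Finset.le_sup (Finset.mem_univ c)
    by_cases h : c < y
    · simp only [h, if_true]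
      rcases lt_or_eq_of_le hle with h' | h'
      · omega
      · exfalso
        have hcmem : c ∈ Finset.univ.filter
            fun c => voteCount p c = Finset.univ.sup (voteCount p) :=
          Finset.mem_filter.mpr ⟨Finset.mem_univ c, h' ▸ hAy⟩
        have h2 : majorityLabel hC p ≤ c := Finset.min'_le _ c hcmem
        rw [← hy] at h2
        exact absurd h2 (not_le.mpr h)
    · simpa [h] using hle
  have hsup : ((Finset.univ.erase y).sup fun c =>
      voteCount p c + if c < y then 1 else 0) ≤ voteCount p y :=
    Finset.sup_le key
  apply Finset.sup_le
  intro c hc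
  have h1 : (Γ.filter fun j => p j ≠ c).card ≤ Γ.card := Finset.card_filter_le _ _
  have h3 : (Γ.filter fun j => p j = y).card ≤ Γ.card := Finset.card_filter_le _ _
  have h4 : voteCount p c + (if c < y then 1 else 0) ≤
      (Finset.univ.erase y).sup fun c => voteCount p c + if c < y then 1 else 0 :=
    Finset.le_sup (f := fun c => voteCount p c + if c < y then 1 else 0) hc
  omega
end

section
/- Let m, C, t be natural numbers with t ≤ m, let D be a finite family of test items, each item i consisting of a prediction vector p_i : Fin m → Fin C and a true label y_i : Fin C, and declare item i 'individually certified at radius t' if its majority-vote label equals y_i and its certified size is at least t, and 'jointly certified for a set Γ ⊆ Fin m' if its majority-vote label equals y_i and the joint-certification condition holds for Γ. Then the joint certified accuracy, namely the minimum over all subsets Γ of Fin m of cardinality t of the number of jointly certified items for Γ, is at least the number of individually certified items at radius t. -/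
/-- Certified-size gap `M y - max_{c ≠ y}(M c + I(c < y))` of a prediction vector. -/
def certGap {m C : ℕ} (hC : 0 < C) (p : Fin m → Fin C) : ℕ :=
  voteCount p (majorityLabel hC p) -
    ((Finset.univ.erase (majorityLabel hC p)).sup fun c =>
      voteCount p c + if c < majorityLabel hC p then 1 else 0)

/-- Joint-certification condition of item with predictions `p` for corrupted set `Γ`. -/
def jointCond {m C : ℕ} (hC : 0 < C) (p : Fin m → Fin C) (Γ : Finset (Fin m)) : Prop :=
  voteCount p (majorityLabel hC p) -
      (Γ.filter fun j => p j = majorityLabel hC p).card ≥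
    ((Finset.univ.erase (majorityLabel hC p)).sup fun c =>
      voteCount p c + (Γ.filter fun j => p j ≠ c).card +
        if c < majorityLabel hC p then 1 else 0)

instance {m C : ℕ} (hC : 0 < C) (p : Fin m → Fin C) (Γ : Finset (Fin m)) :
    Decidable (jointCond hC p Γ) := by unfold jointCond; infer_instance

open Finset

section MajorityVote

variable {m C : ℕ} (hC : 0 < C) (p : Fin m → Fin C)

lemma voteCount_majorityLabel :
    voteCount p (majorityLabel hC p) = univ.sup (voteCount p) :=
  (mem_filter.mp (min'_mem (univ.filter fun c => voteCount p c = univ.sup (voteCount p)) _)).2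

lemma majorityLabel_le_of_voteCount_eq {c : Fin C}
    (hc : voteCount p c = univ.sup (voteCount p)) : majorityLabel hC p ≤ c :=
  min'_le _ c (mem_filter.mpr ⟨mem_univ c, hc⟩)

lemma voteCount_le_voteCount_majorityLabel (c : Fin C) :
    voteCount p c ≤ voteCount p (majorityLabel hC p) :=
  voteCount_majorityLabel hC p ▸ le_sup (mem_univ c)

lemma voteCount_add_ite_lt_le_voteCount_majorityLabel (c : Fin C) :
    voteCount p c + (if c < majorityLabel hC p then 1 else 0) ≤
      voteCount p (majorityLabel hC p) := by
  have hle := voteCount_le_voteCount_majorityLabel hC p c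
  split_ifs with hlt
  · refine lt_of_le_of_ne hle fun heq => ?_
    exact (majorityLabel_le_of_voteCount_eq hC p
      (heq.trans (voteCount_majorityLabel hC p))).not_gt hlt
  · simpa using hle

lemma sup_voteCount_add_ite_lt_le_voteCount_majorityLabel (s : Finset (Fin C)) :
    (s.sup fun c =>
        voteCount p c + if c < majorityLabel hC p then 1 else 0) ≤
      voteCount p (majorityLabel hC p) :=
  Finset.sup_le fun c _ => voteCount_add_ite_lt_le_voteCount_majorityLabel hC p c

lemma jointCond_of_two_mul_card_le_certGap {Γ : Finset (Fin m)}
    (hΓ : 2 * Γ.card ≤ certGap hC p) : jointCond hC p Γ := by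
  have hrunnerUp :=
    sup_voteCount_add_ite_lt_le_voteCount_majorityLabel hC p (univ.erase (majorityLabel hC p))
  unfold certGap at hΓ
  refine Finset.sup_le fun c hc => ?_
  have hc_le := le_sup (f := fun c =>
    voteCount p c + if c < majorityLabel hC p then 1 else 0) hc
  have hlost := card_filter_le Γ fun j => p j = majorityLabel hC p
  have hgained := card_filter_le Γ fun j => p j ≠ c
  omega

end MajorityVote

theorem joint_certified_accuracy_ge_individual_general {m C : ℕ} (hC : 0 < C)
    (t : ℕ) (htm : t ≤ m) (n : ℕ)
    (p : Fin n → Fin m → Fin C) (ytrue : Fin n → Fin C) :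
    (Finset.univ.filter fun i =>
        majorityLabel hC (p i) = ytrue i ∧ 2 * t ≤ certGap hC (p i)).card ≤
    sInf {k : ℕ | ∃ Γ : Finset (Fin m), Γ.card = t ∧
      k = (Finset.univ.filter fun i =>
        majorityLabel hC (p i) = ytrue i ∧ jointCond hC (p i) Γ).card} := by
  apply le_csInf
  · obtain ⟨Γ, -, hΓ⟩ :=
      exists_subset_card_eq (s := (univ : Finset (Fin m))) (by simpa using htm)
    exact ⟨_, Γ, hΓ, rfl⟩
  · rintro k ⟨Γ, rfl, rfl⟩
    exact card_le_card <| monotone_filter_right _ fun i _ ⟨hy, hgap⟩ =>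
      ⟨hy, jointCond_of_two_mul_card_le_certGap hC (p i) hgap⟩

/-- Section 4.2.3 of TextGuard: the joint certified accuracy (minimum over all
    corrupted sets `Γ` of size `t` of the number of jointly certified items)
    is at least the number of individually certified items at radius `t`. -/
theorem joint_certified_accuracy_ge_individual {m C : ℕ} (hm : 0 < m) (hC : 0 < C)
    (t : ℕ) (htm : t ≤ m) (n : ℕ)
    (p : Fin n → Fin m → Fin C) (ytrue : Fin n → Fin C) :
    (Finset.univ.filter fun i =>
        majorityLabel hC (p i) = ytrue i ∧ 2 * t ≤ certGap hC (p i)).card ≤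
    sInf {k : ℕ | ∃ Γ : Finset (Fin m), Γ.card = t ∧
      k = (Finset.univ.filter fun i =>
        majorityLabel hC (p i) = ytrue i ∧ jointCond hC (p i) Γ).card} :=
  joint_certified_accuracy_ge_individual_general hC t htm n p ytrue
end

section
/- Let W be a type of words with decidable equality, let L be a type of labels, let m be a positive natural number, and let h : W → Fin m be a group-assignment function, with group-j content of a text x (a multiset of words) defined as g_j(x) = the sub-multiset of words w in x with h(w) = j. Let D and D' be two lists of (text, label) pairs of the same length such that for every position i, the labels agree and the text of D' at i equals the text of D at i plus a multiset of words all lying in a finite trigger set e. Define the group-j sub-dataset of a dataset E as the list obtained by replacing each pair (x, y) in E by (g_j(x), y). Then for every group index j not in the image h '' e, the group-j sub-dataset of D' equals the group-j sub-dataset of D. -/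
/-- The group-`j` content of a text (a multiset of words). -/
def groupContent {W : Type*} [DecidableEq W] {m : ℕ} (h : W → Fin m)
    (j : Fin m) (x : Multiset W) : Multiset W :=
  x.filter fun w => h w = j

/-- The group-`j` sub-dataset of a dataset: replace each pair `(x, y)` by
    `(g_j(x), y)`. -/
def subDataset {W : Type*} [DecidableEq W] {L : Type*} {m : ℕ} (h : W → Fin m)
    (j : Fin m) (E : List (Multiset W × L)) : List (Multiset W × L) :=
  E.map fun xy => (groupContent h j xy.1, xy.2)

/-- TextGuard (NDSS 2024): all sub-datasets for groups not hit by a trigger word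
    are identical between the backdoored dataset `D'` and the certified dataset `D`. -/
theorem untouched_subDatasets_unchanged {W : Type*} [DecidableEq W] {L : Type*}
    {m : ℕ} (hm : 0 < m) (h : W → Fin m) (e : Finset W)
    (D D' : List (Multiset W × L))
    (hrel : List.Forall₂ (fun d d' => d.2 = d'.2 ∧
      ∃ a : Multiset W, (∀ w ∈ a, w ∈ e) ∧ d'.1 = d.1 + a) D D') :
    ∀ j : Fin m, j ∉ e.image h → subDataset h j D' = subDataset h j D := by
  intro j hj
  induction hrel with
  | nil => rfl
  | cons hd tl ih =>
    obtain ⟨hlab, a, ha, heq⟩ := hd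
    simp only [subDataset, List.map_cons] at *
    refine congrArg₂ _ ?_ ih
    have hafilt : Multiset.filter (fun w => h w = j) a = 0 := by
      rw [Multiset.filter_eq_nil]
      intro w hw hwj
      exact hj (Finset.mem_image.mpr ⟨w, ha w hw, hwj⟩)
    simp [groupContent, heq, Multiset.filter_add, hafilt, hlab]
end

section
/- Let W be a type of words with decidable equality, let C and m be positive natural numbers, let h : W → Fin m be a group-assignment function, and for a text x (a multiset of words) let g_j(x) be the sub-multiset of words w in x with h(w) = j. Let A : List (Multiset W × Fin C) → (Multiset W → Fin C) be any deterministic training algorithm, and define the TextGuard ensemble for a training dataset E (a list of text–label pairs) on input x as the majority-vote label (smallest label attaining the maximal count) of the vector j ↦ (A applied to the group-j sub-dataset of E) evaluated at g_j(x). Let D and D' be datasets of equal length with identical labels whose texts at each position differ only by adding words from a finite trigger set e, and let x be a test text and x' = x + a with all elements of a in e. Let M c be the vote count of class c for the ensemble built on D evaluated at x, and let y be its majority-vote label. If 2·|e| ≤ M y - max over c ≠ y of (M c + (if c < y then 1 else 0)), then the ensemble built on D' evaluated at x' predicts y, i.e., the ensemble built on the backdoored dataset applied to the backdoored input returns the same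 label as the ensemble built on the certified dataset applied to the clean input. -/
/-- The vector of base-classifier predictions of the TextGuard ensemble built
    from dataset `E` by the deterministic training algorithm `A`, on input `x`. -/
def basePreds {W : Type*} [DecidableEq W] {m C : ℕ} (h : W → Fin m)
    (A : List (Multiset W × Fin C) → Multiset W → Fin C)
    (E : List (Multiset W × Fin C)) (x : Multiset W) : Fin m → Fin C :=
  fun j => A (subDataset h j E) (groupContent h j x)


lemma groupContent_add_triggers {W : Type*} [DecidableEq W] {m : ℕ}
    (h : W → Fin m) (e : Finset W) {j : Fin m} (hj : j ∉ e.image h)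
    (t b : Multiset W) (hb : ∀ w ∈ b, w ∈ e) :
    groupContent h j (t + b) = groupContent h j t := by
  unfold groupContent
  rw [Multiset.filter_add]
  have hz : Multiset.filter (fun w => h w = j) b = 0 := by
    rw [Multiset.filter_eq_nil]
    intro w hw hwj
    exact hj (Finset.mem_image.mpr ⟨w, hb w hw, hwj⟩)
  rw [hz, add_zero]

lemma subDataset_eq_of_triggers {W : Type*} [DecidableEq W] {m C : ℕ}
    (h : W → Fin m) (e : Finset W) {j : Fin m} (hj : j ∉ e.image h)
    {D D' : List (Multiset W × Fin C)}
    (hrel : List.Forall₂ (fun d d' => d.2 = d'.2 ∧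
      ∃ a : Multiset W, (∀ w ∈ a, w ∈ e) ∧ d'.1 = d.1 + a) D D') :
    subDataset h j D' = subDataset h j D := by
  induction hrel with
  | nil => rfl
  | cons h₁ h₂ ih =>
    unfold subDataset at *
    simp only [List.map_cons, ih]
    obtain ⟨hlab, b, hb, hfst⟩ := h₁
    rw [hfst, groupContent_add_triggers h e hj _ b hb, hlab]

lemma voteCount_le_of_agree {m C : ℕ} (p p' : Fin m → Fin C) (S : Finset (Fin m))
    (hag : ∀ j ∉ S, p' j = p j) (c : Fin C) :
    voteCount p c ≤ voteCount p' c + S.card := by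
  unfold voteCount
  calc (Finset.univ.filter fun j => p j = c).card
      ≤ ((Finset.univ.filter fun j => p' j = c) ∪ S).card := by
        apply Finset.card_le_card
        intro j hj
        rw [Finset.mem_filter] at hj
        by_cases hjS : j ∈ S
        · exact Finset.mem_union_right _ hjS
        · exact Finset.mem_union_left _
            (Finset.mem_filter.mpr ⟨Finset.mem_univ j, (hag j hjS).trans hj.2⟩)
    _ ≤ _ := Finset.card_union_le _ _

lemma majorityLabel_eq_of {m C : ℕ} (hC : 0 < C) (p : Fin m → Fin C) (y : Fin C)
    (hmax : ∀ c, voteCount p c ≤ voteCount p y)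
    (hstrict : ∀ c, c < y → voteCount p c < voteCount p y) :
    majorityLabel hC p = y := by
  have hsup : Finset.univ.sup (voteCount p) = voteCount p y :=
    le_antisymm (Finset.sup_le fun c _ => hmax c)
      (Finset.le_sup (Finset.mem_univ y))
  have hymem : y ∈ Finset.univ.filter
      fun c => voteCount p c = Finset.univ.sup (voteCount p) :=
    Finset.mem_filter.mpr ⟨Finset.mem_univ y, hsup.symm⟩
  unfold majorityLabel
  apply le_antisymm (Finset.min'_le _ _ hymem)
  by_contra hlt
  push_neg at hlt
  have hmem := Finset.min'_mem
    (Finset.univ.filter fun c => voteCount p c = Finset.univ.sup (voteCount p))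
    (by exact ⟨y, hymem⟩)
  rw [Finset.mem_filter] at hmem
  have h3 := hmem.2.trans hsup
  have := hstrict _ hlt
  omega

/-- Theorem 1 of TextGuard (NDSS 2024): if twice the trigger size `|e|` is at most
    the certified-size gap of the ensemble built on the certified dataset `D` at the
    clean test text `x`, then the ensemble built on the backdoored dataset `D'`
    applied to the backdoored input `x + a` returns the same label `y`. -/
theorem textguard_theorem1 {W : Type*} [DecidableEq W] {m C : ℕ}
    (hm : 0 < m) (hC : 0 < C) (h : W → Fin m)
    (A : List (Multiset W × Fin C) → Multiset W → Fin C)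
    (e : Finset W) (D D' : List (Multiset W × Fin C))
    (hrel : List.Forall₂ (fun d d' => d.2 = d'.2 ∧
      ∃ a : Multiset W, (∀ w ∈ a, w ∈ e) ∧ d'.1 = d.1 + a) D D')
    (x a : Multiset W) (ha : ∀ w ∈ a, w ∈ e)
    (y : Fin C) (hy : y = majorityLabel hC (basePreds h A D x))
    (hcert : 2 * e.card ≤ voteCount (basePreds h A D x) y -
      ((Finset.univ.erase y).sup fun c =>
        voteCount (basePreds h A D x) c + if c < y then 1 else 0)) :
    majorityLabel hC (basePreds h A D' (x + a)) = y := by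
  classical
  set p := basePreds h A D x with hp
  set p' := basePreds h A D' (x + a) with hp'
  set S : Finset (Fin m) := e.image h with hS
  have hagree : ∀ j ∉ S, p' j = p j := by
    intro j hj
    have hx : groupContent h j (x + a) = groupContent h j x :=
      groupContent_add_triggers h e hj x a ha
    have hD : subDataset h j D' = subDataset h j D :=
      subDataset_eq_of_triggers h e hj hrel
    simp only [hp, hp', basePreds, hx, hD]
  rcases Nat.eq_zero_or_pos e.card with hk | hk
  · have he : e = ∅ := Finset.card_eq_zero.mp hk
    have hSe : S = ∅ := by simp [hS, he]
    have hpp : p' = p := funext fun j => hagree j (by simp [hSe])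
    rw [hpp]; exact hy.symm
  · have hScard : S.card ≤ e.card := Finset.card_image_le
    have h1 : ∀ c, voteCount p c ≤ voteCount p' c + S.card :=
      voteCount_le_of_agree p p' S hagree
    have h2 : ∀ c, voteCount p' c ≤ voteCount p c + S.card :=
      voteCount_le_of_agree p' p S (fun j hj => (hagree j hj).symm)
    have key : ∀ c, c ≠ y →
        voteCount p' c + (if c < y then 1 else 0) ≤ voteCount p' y := by
      intro c hc
      have hcs : voteCount p c + (if c < y then 1 else 0) ≤
          (Finset.univ.erase y).sup fun c =>
            voteCount p c + if c < y then 1 else 0 :=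
        Finset.le_sup (f := fun c => voteCount p c + if c < y then 1 else 0)
          (Finset.mem_erase.mpr ⟨hc, Finset.mem_univ c⟩)
      have hy1 := h1 y
      have hc2 := h2 c
      omega
    apply majorityLabel_eq_of
    · intro c
      by_cases hc : c = y
      · rw [hc]
      · have := key c hc
        omega
    · intro c hcy
      have := key c (ne_of_lt hcy)
      simp only [if_pos hcy] at this
      omega
end

section
/- Let m, C, t be natural numbers, and let D be a finite family of test items, each item i consisting of a clean prediction vector p_i : Fin m → Fin C and a true label y_i : Fin C. For each item i let an attacked prediction vector p'_i : Fin m → Fin C be given, and suppose there exists a single set S ⊆ Fin m with |S| ≤ t such that for every item i, p_i and p'_i agree on all indices outside S (the same trigger corrupts the same groups for all test inputs). Then the number of items i for which the majority-vote label of p'_i equals y_i is at least the joint certified count, namely the minimum over all subsets Γ ⊆ Fin m with |Γ| = t of the number of items i that are correctly classified by p_i and satisfy the joint-certification condition M_i y_i' - |{j ∈ Γ | p_i j = y_i'}| ≥ max over c ≠ y_i' of (M_i c + |{j ∈ Γ | p_i j ≠ c}| + (if c < y_i' then 1 else 0)), where y_i' is the majority-vote label of p_i and M_i c = |{j | p_i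 j = c}|. -/
private lemma key {m C : ℕ} (hC : 0 < C) (p p' : Fin m → Fin C) (Γ : Finset (Fin m))
    (hagree : ∀ j, j ∉ Γ → p j = p' j) (hcond : jointCond hC p Γ) :
    majorityLabel hC p' = majorityLabel hC p := by
  set y := majorityLabel hC p with hy
  -- lower bound on attacked votes for y
  have hA : voteCount p y - (Γ.filter fun j => p j = y).card ≤ voteCount p' y := by
    have hsplit : (Finset.univ.filter fun j => p j = y).card =
        (Γ.filter fun j => p j = y).card +
        ((Finset.univ.filter fun j => p j = y).filter fun j => j ∉ Γ).card := by
      rw [Finset.filter_filter]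
      rw [← Finset.card_union_of_disjoint]
      · congr 1
        ext j
        simp only [Finset.mem_union, Finset.mem_filter, Finset.mem_univ, true_and]
        tauto
      · rw [Finset.disjoint_left]
        intro a ha hb
        simp only [Finset.mem_filter] at ha hb
        exact hb.2.2 ha.1
    have hsub : ((Finset.univ.filter fun j => p j = y).filter fun j => j ∉ Γ) ⊆
        Finset.univ.filter fun j => p' j = y := by
      intro j hj
      simp only [Finset.mem_filter, Finset.mem_univ, true_and] at hj ⊢
      rw [← hagree j hj.2]; exact hj.1
    calc voteCount p y - (Γ.filter fun j => p j = y).card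
        = ((Finset.univ.filter fun j => p j = y).filter fun j => j ∉ Γ).card := by
          unfold voteCount; omega
      _ ≤ voteCount p' y := Finset.card_le_card hsub
  -- upper bound on attacked votes for c
  have hB : ∀ c : Fin C, voteCount p' c ≤ voteCount p c + (Γ.filter fun j => p j ≠ c).card := by
    intro c
    have hsub : (Finset.univ.filter fun j => p' j = c) ⊆
        (Finset.univ.filter fun j => p j = c) ∪ (Γ.filter fun j => p j ≠ c) := by
      intro j hj
      simp only [Finset.mem_filter, Finset.mem_univ, true_and, Finset.mem_union] at hj ⊢
      by_cases h : p j = c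
      · exact Or.inl h
      · refine Or.inr ⟨?_, h⟩
        by_contra hjΓ
        exact h (hj ▸ hagree j hjΓ)
    calc voteCount p' c ≤ _ := Finset.card_le_card hsub
      _ ≤ _ := Finset.card_union_le _ _
  have hmain : ∀ c : Fin C, c ≠ y →
      voteCount p' c + (if c < y then 1 else 0) ≤ voteCount p' y := by
    intro c hc
    have hle : voteCount p c + (Γ.filter fun j => p j ≠ c).card + (if c < y then 1 else 0)
        ≤ voteCount p y - (Γ.filter fun j => p j = y).card := by
      refine le_trans (Finset.le_sup (f := fun c =>
        voteCount p c + (Γ.filter fun j => p j ≠ c).card + if c < y then 1 else 0) ?_) hcond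
      exact Finset.mem_erase.mpr ⟨hc, Finset.mem_univ c⟩
    have := hB c
    omega
  -- sup of p' votes is at y
  have hsup : Finset.univ.sup (voteCount p') = voteCount p' y := by
    apply le_antisymm
    · apply Finset.sup_le
      intro c _
      by_cases hc : c = y
      · subst hc; exact le_rfl
      · have := hmain c hc; split_ifs at this <;> omega
    · exact Finset.le_sup (Finset.mem_univ y)
  have hymem : y ∈ Finset.univ.filter fun c => voteCount p' c = Finset.univ.sup (voteCount p') := by
    simp [hsup]
  unfold majorityLabel
  apply le_antisymm
  · exact Finset.min'_le _ _ hymem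
  · set F := Finset.univ.filter fun c => voteCount p' c = Finset.univ.sup (voteCount p')
    have hne : F.Nonempty := ⟨y, hymem⟩
    have hmin := Finset.min'_mem F hne
    simp only [F, Finset.mem_filter] at hmin
    by_contra hlt
    push_neg at hlt
    have hne' : F.min' hne ≠ y := ne_of_lt hlt
    have he : voteCount p' (F.min' hne) = voteCount p' y := hmin.2.trans hsup
    have := hmain _ hne'
    rw [if_pos hlt] at this
    omega

/-- Section 4.2.3 / Algorithm 2 of TextGuard (NDSS 2024): if a single group set `S`
    with `|S| ≤ t` is corrupted for all test inputs (the same trigger corrupts the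
    same groups everywhere), then the number of items whose attacked majority-vote
    label equals the true label is at least the joint certified count, i.e. the
    minimum over all `Γ` with `|Γ| = t` of the number of items correctly classified
    by the clean predictions and satisfying the joint-certification condition for `Γ`. -/
theorem joint_certified_count_is_lower_bound {m C : ℕ} (hm : 0 < m) (hC : 0 < C)
    (t : ℕ) (n : ℕ) (p p' : Fin n → Fin m → Fin C) (ytrue : Fin n → Fin C)
    (S : Finset (Fin m)) (hS : S.card ≤ t)
    (hagree : ∀ (i : Fin n) (j : Fin m), j ∉ S → p i j = p' i j) :
    sInf {k : ℕ | ∃ Γ : Finset (Fin m), Γ.card = t ∧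
      k = (Finset.univ.filter fun i =>
        majorityLabel hC (p i) = ytrue i ∧ jointCond hC (p i) Γ).card} ≤
    (Finset.univ.filter fun i => majorityLabel hC (p' i) = ytrue i).card := by
  by_cases ht : t ≤ m
  · obtain ⟨Γ, hSΓ, hΓcard⟩ := Finset.exists_superset_card_eq (le_trans hS (le_of_eq rfl))
      (by simpa using ht)
    refine le_trans (Nat.sInf_le ⟨Γ, hΓcard, rfl⟩) (Finset.card_le_card ?_)
    intro i hi
    simp only [Finset.mem_filter, Finset.mem_univ, true_and] at hi ⊢
    rw [key hC (p i) (p' i) Γ (fun j hj => hagree i j (fun hjS => hj (hSΓ hjS))) hi.2]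
    exact hi.1
  · have hempty : {k : ℕ | ∃ Γ : Finset (Fin m), Γ.card = t ∧
        k = (Finset.univ.filter fun i =>
          majorityLabel hC (p i) = ytrue i ∧ jointCond hC (p i) Γ).card} = ∅ := by
      ext k
      simp only [Set.mem_setOf_eq, Set.mem_empty_iff_false, iff_false, not_exists]
      intro Γ ⟨hΓ, _⟩
      exact ht (hΓ ▸ le_trans (Finset.card_le_card (Finset.subset_univ Γ)) (by simp))
    rw [hempty, Nat.sInf_empty]
    exact Nat.zero_le _
end
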